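/- Let H be symmetric with λ₁(H) + 2√(L₂ε) + 2‖g‖Λ + (L₁+ζ)Λ² ≥ 0, and set α = 3√(L₂ε) + 2‖g‖Λ + (L₁+ζ)Λ². Then for G(α) = [[H, g],[g^T, -α]], the eigenvalue gap satisfies λ₂(G(α)) - λ₁(G(α)) ≥ λ₁(H) + α ≥ √(L₂ε). -/

import Mathlib

open Matrix

lemma rayleigh_min_aux {m : Type*} [Fintype m] [DecidableEq m]
    {A : Matrix m m ℝ} (hA : A.IsHermitian) {c : ℝ}
    (hc : ∀ i, c ≤ hA.eigenvalues i) (x : m → ℝ) :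
    c * (x ⬝ᵥ x) ≤ x ⬝ᵥ (A *ᵥ x) := by
  classical
  set U : Matrix m m ℝ := (hA.eigenvectorUnitary : Matrix m m ℝ) with hU
  set y : m → ℝ := (star U) *ᵥ x with hy
  have hUs : U * star U = 1 := Matrix.mem_unitaryGroup_iff.mp hA.eigenvectorUnitary.2
  have hsU : star U * U = 1 := Matrix.mem_unitaryGroup_iff'.mp hA.eigenvectorUnitary.2
  have hUy : U *ᵥ y = x := by
    rw [hy, mulVec_mulVec, hUs, one_mulVec]
  have hstar : (star U) = Uᵀ := by
    ext i j; simp [Matrix.conjTranspose_apply]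
  have hxy : ∀ v : m → ℝ, x ⬝ᵥ (U *ᵥ v) = y ⬝ᵥ v := by
    intro v
    rw [dotProduct_mulVec, ← mulVec_transpose, ← hstar, hy]
  have hxx : x ⬝ᵥ x = y ⬝ᵥ y := by
    have h := hxy y
    rw [hUy] at h
    exact h
  have hAx : x ⬝ᵥ (A *ᵥ x) = ∑ i, hA.eigenvalues i * (y i)^2 := by
    conv_lhs => rw [hA.spectral_theorem, Unitary.conjStarAlgAut_apply]
    rw [← mulVec_mulVec, ← mulVec_mulVec, hxy]
    have : (star U) *ᵥ x = y := rfl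
    rw [this]
    simp [mulVec_diagonal, dotProduct, Function.comp]
    congr 1; ext i; ring
  rw [hxx, hAx, dotProduct]
  have : c * ∑ i, y i * y i = ∑ i, c * (y i)^2 := by
    rw [Finset.mul_sum]; congr 1; ext i; ring
  rw [this]
  exact Finset.sum_le_sum fun i _ => mul_le_mul_of_nonneg_right (hc i) (sq_nonneg _)

/-- Eigenvalue-gap bound: if `λ₁(H) + 2√(L₂ε) + 2‖g‖Λ + (L₁+ζ)Λ² ≥ 0`
and `α = 3√(L₂ε) + 2‖g‖Λ + (L₁+ζ)Λ²`, then for `G(α) = [[H, g],[gᵀ, -α]]`,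
`λ₂(G(α)) - λ₁(G(α)) ≥ λ₁(H) + α ≥ √(L₂ε)`. -/
theorem hsda_eigenvalue_gap
    {n : ℕ} (hn : 0 < n)
    (H : Matrix (Fin n) (Fin n) ℝ) (hH : H.IsHermitian)
    (g : Fin n → ℝ) (L₁ L₂ ε Λ ζ α : ℝ)
    (hL₁ : 0 < L₁) (hL₂ : 0 < L₂) (hε : 0 < ε) (hΛ : 0 < Λ)
    -- `ν` is the nondecreasing enumeration of the eigenvalues of `H`
    (ν : Fin n → ℝ) (hνmono : Monotone ν)
    (e' : Fin n ≃ Fin n) (hν : ∀ i, hH.eigenvalues i = ν (e' i))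
    (hlow : ν ⟨0, hn⟩ + 2 * Real.sqrt (L₂ * ε) + 2 * Real.sqrt (g ⬝ᵥ g) * Λ
        + (L₁ + ζ) * Λ ^ 2 ≥ 0)
    (hαdef : α = 3 * Real.sqrt (L₂ * ε) + 2 * Real.sqrt (g ⬝ᵥ g) * Λ
        + (L₁ + ζ) * Λ ^ 2)
    (G : Matrix (Fin n ⊕ Unit) (Fin n ⊕ Unit) ℝ)
    (hG : G = Matrix.of fun i j =>
      match i, j with
      | Sum.inl i, Sum.inl j => H i j
      | Sum.inl i, Sum.inr _ => g i
      | Sum.inr _, Sum.inl j => g j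
      | Sum.inr _, Sum.inr _ => -α)
    (hGh : G.IsHermitian)
    -- `μ` is the nondecreasing enumeration of the eigenvalues of `G(α)`
    (μ : Fin (n + 1) → ℝ) (hμmono : Monotone μ)
    (e : Fin n ⊕ Unit ≃ Fin (n + 1)) (hμ : ∀ i, hGh.eigenvalues i = μ (e i)) :
    μ ⟨1, by omega⟩ - μ ⟨0, by omega⟩ ≥ ν ⟨0, hn⟩ + α ∧
      ν ⟨0, hn⟩ + α ≥ Real.sqrt (L₂ * ε) := by
  classical
  have hsq : 0 ≤ Real.sqrt (L₂ * ε) := Real.sqrt_nonneg _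
  set z0 : Fin (n + 1) := ⟨0, by omega⟩ with hz0
  set z1 : Fin (n + 1) := ⟨1, by omega⟩ with hz1
  -- min eigenvalue bounds
  have hμmin : ∀ i, μ z0 ≤ hGh.eigenvalues i := fun i => by
    rw [hμ i]; exact hμmono (by simp [hz0, Fin.le_def])
  have hνmin : ∀ i, ν ⟨0, hn⟩ ≤ hH.eigenvalues i := fun i => by
    rw [hν i]; exact hνmono (by simp [Fin.le_def])
  -- Step A : μ z0 ≤ -α
  have hstepA : μ z0 ≤ -α := by
    have h := rayleigh_min_aux hGh hμmin (Pi.single (Sum.inr ()) 1)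
    have h1 : (Pi.single (Sum.inr ()) 1 : Fin n ⊕ Unit → ℝ) ⬝ᵥ Pi.single (Sum.inr ()) 1 = 1 := by
      simp
    have h2 : (Pi.single (Sum.inr ()) 1 : Fin n ⊕ Unit → ℝ) ⬝ᵥ
        (G *ᵥ Pi.single (Sum.inr ()) 1) = -α := by
      subst hG
      simp [Matrix.mulVec_single]
    rw [h1, h2, mul_one] at h
    exact h
  -- Step B : ν ⟨0,hn⟩ ≤ μ z1
  have hstepB : ν ⟨0, hn⟩ ≤ μ z1 := by
    set b := hGh.eigenvectorBasis with hb
    set i0 := e.symm z0 with hi0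
    set i1 := e.symm z1 with hi1
    have hne : i0 ≠ i1 := fun h => by
      have : z0 = z1 := e.symm.injective h
      simp [hz0, hz1, Fin.ext_iff] at this
    have hdot : ∀ i j, (⇑(b i) : Fin n ⊕ Unit → ℝ) ⬝ᵥ ⇑(b j) = if i = j then 1 else 0 := by
      intro i j
      rw [← orthonormal_iff_ite.mp b.orthonormal i j]
      simp [dotProduct, PiLp.inner_apply, mul_comm]
    set a0 : ℝ := b i0 (Sum.inr ()) with ha0
    set a1 : ℝ := b i1 (Sum.inr ()) with ha1
    obtain ⟨c0, c1, hc, hzero⟩ : ∃ c0 c1 : ℝ, (c0 ≠ 0 ∨ c1 ≠ 0) ∧ c0 * a0 + c1 * a1 = 0 := by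
      by_cases h : a0 = 0
      · exact ⟨1, 0, Or.inl one_ne_zero, by simp [h]⟩
      · exact ⟨-a1, a0, Or.inr h, by ring⟩
    set x : Fin n ⊕ Unit → ℝ := c0 • ⇑(b i0) + c1 • ⇑(b i1) with hx
    have hxinr : x (Sum.inr ()) = 0 := by
      have h : x (Sum.inr ()) = c0 * a0 + c1 * a1 := rfl
      rw [h, hzero]
    set x' : Fin n → ℝ := fun i => x (Sum.inl i) with hx'
    have hxx : x ⬝ᵥ x = c0 ^ 2 + c1 ^ 2 := by
      simp [hx, add_dotProduct, dotProduct_add, smul_dotProduct, dotProduct_smul,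
        hdot, hne, hne.symm]
      ring
    have heig0 : hGh.eigenvalues i0 = μ z0 := by rw [hμ i0, hi0, e.apply_symm_apply]
    have heig1 : hGh.eigenvalues i1 = μ z1 := by rw [hμ i1, hi1, e.apply_symm_apply]
    have hGx : x ⬝ᵥ (G *ᵥ x) = μ z0 * c0 ^ 2 + μ z1 * c1 ^ 2 := by
      have hGb : ∀ j, G *ᵥ ⇑(b j) = hGh.eigenvalues j • ⇑(b j) := hGh.mulVec_eigenvectorBasis
      simp [hx, Matrix.mulVec_add, Matrix.mulVec_smul, hGb,
        add_dotProduct, dotProduct_add, smul_dotProduct, dotProduct_smul,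
        hdot, hne, hne.symm, heig0, heig1]
      ring
    have hsplit : x ⬝ᵥ (G *ᵥ x) = x' ⬝ᵥ (H *ᵥ x') := by
      subst hG
      simp [dotProduct, Matrix.mulVec, Fintype.sum_sum_type, hxinr, hx']
    have hxx' : x' ⬝ᵥ x' = c0 ^ 2 + c1 ^ 2 := by
      rw [← hxx]
      simp [dotProduct, Fintype.sum_sum_type, hxinr, hx']
    have hpos : 0 < c0 ^ 2 + c1 ^ 2 := by
      rcases hc with h | h
      · have := pow_pos (abs_pos.mpr h) 2
        rw [← sq_abs c0] at *
        nlinarith [sq_nonneg c1, sq_abs c0]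
      · have : 0 < c1 ^ 2 := by positivity
        nlinarith [sq_nonneg c0]
    have hray := rayleigh_min_aux hH hνmin x'
    rw [hxx'] at hray
    rw [← hsplit, hGx] at hray
    have hμ01 : μ z0 ≤ μ z1 := hμmono (by simp [hz0, hz1, Fin.le_def])
    nlinarith [sq_nonneg c0, sq_nonneg c1]
  constructor
  · linarith
  · linarith
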